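/- arXiv:2509.03600 — 7 statements merged into one kernel-verified Lean document; each statement's English description precedes it below -/
import Mathlib

section
/- For each positive integer N, the operator U = (∏_{i=1}^{N} CZ_{i,i+1})·(∏_{i=1}^{N} Z_i X_i) on (ℂ²)^{⊗N} with periodic boundary conditions (site N+1 ≡ site 1) commutes with the Hamiltonian H = ∑_{i=1}^{N} (X_i − Z_{i−1} X_i Z_{i+1}) (indices mod N). -/
open Matrix Finset

noncomputable section

/-- Pauli X. -/
def PX : Matrix (Fin 2) (Fin 2) ℂ := !![0, 1; 1, 0]

/-- Pauli Z. -/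
def PZ : Matrix (Fin 2) (Fin 2) ℂ := !![1, 0; 0, -1]

/-- The operator on `(ℂ²)^{⊗N}` acting as `A` on site `i` and as the identity elsewhere. -/
def site (N : ℕ) (i : Fin N) (A : Matrix (Fin 2) (Fin 2) ℂ) :
    Matrix (Fin N → Fin 2) (Fin N → Fin 2) ℂ :=
  Matrix.of fun f g =>
    A (f i) (g i) * ∏ j ∈ Finset.univ.erase i, (if f j = g j then (1 : ℂ) else 0)

/-- The product `∏_{i=1}^{N} CZ_{i,i+1}` of controlled-Z gates on adjacent qubits
(periodic boundary conditions, site indices mod `N`); all these gates are diagonal,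
so the product is the diagonal operator below. -/
def CZlayer (N : ℕ) [NeZero N] : Matrix (Fin N → Fin 2) (Fin N → Fin 2) ℂ :=
  Matrix.diagonal fun f => ∏ i : Fin N, (if f i = 1 ∧ f (i + 1) = 1 then (-1 : ℂ) else 1)

/-- The product `∏_{i=1}^{N} Z_i X_i`: the tensor product of `Z·X` on every site. -/
def ZXlayer (N : ℕ) : Matrix (Fin N → Fin 2) (Fin N → Fin 2) ℂ :=
  Matrix.of fun f g => ∏ i : Fin N, (PZ * PX) (f i) (g i)

/-- `U_CZY = (∏_i CZ_{i,i+1})·(∏_i Z_i X_i)` on `(ℂ²)^{⊗N}`, periodic boundary conditions. -/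
def UCZY (N : ℕ) [NeZero N] : Matrix (Fin N → Fin 2) (Fin N → Fin 2) ℂ :=
  CZlayer N * ZXlayer N

/-- The Hamiltonian `H = ∑_i (X_i − Z_{i−1} X_i Z_{i+1})`, indices mod `N`. -/
def ham (N : ℕ) [NeZero N] : Matrix (Fin N → Fin 2) (Fin N → Fin 2) ℂ :=
  ∑ i : Fin N, (site N i PX - site N (i - 1) PZ * site N i PX * site N (i + 1) PZ)

namespace LGaux

def ee (a : Fin 2) : ℂ := if a = 1 then -1 else 1

def tt (a b : Fin 2) : ℂ := if a = 1 ∧ b = 1 then -1 else 1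

def flipAll {N : ℕ} (f : Fin N → Fin 2) : Fin N → Fin 2 := fun i => f i + 1

def cc (N : ℕ) [NeZero N] (f : Fin N → Fin 2) : ℂ := ∏ i : Fin N, tt (f i) (f (i + 1))

def eps (N : ℕ) (f : Fin N → Fin 2) : ℂ := ∏ i : Fin N, ee (f i)

lemma two_add (a : Fin 2) : a + 1 + 1 = a := by revert a; decide

lemma flip_flip {N : ℕ} (f : Fin N → Fin 2) : flipAll (flipAll f) = f :=
  funext fun i => two_add _

lemma ee_sq (a : Fin 2) : ee a * ee a = 1 := by fin_cases a <;> simp [ee]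

lemma ee_add_one (a : Fin 2) : ee (a + 1) = -ee a := by fin_cases a <;> simp [ee]

lemma tt_sq (a b : Fin 2) : tt a b * tt a b = 1 := by
  unfold tt; by_cases h : a = 1 ∧ b = 1 <;> simp [h]

lemma hPX : ∀ a b : Fin 2, PX a b = if b = a + 1 then (1:ℂ) else 0 := by
  intro a b; fin_cases a <;> fin_cases b <;> simp [PX]

lemma hPZ : ∀ a b : Fin 2, PZ a b = if b = a then ee a else 0 := by
  intro a b; fin_cases a <;> fin_cases b <;> simp [PZ, ee]

lemma hM : ∀ a b : Fin 2, (PZ * PX) a b = if b = a + 1 then ee a else 0 := by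
  intro a b; fin_cases a <;> fin_cases b <;>
    simp [PZ, PX, ee, Matrix.mul_apply, Fin.sum_univ_two]

/-- Product of Kronecker deltas. -/
lemma prod_delta {N : ℕ} (s : Finset (Fin N)) (f g : Fin N → Fin 2) :
    (∏ j ∈ s, (if f j = g j then (1:ℂ) else 0)) = if ∀ j ∈ s, f j = g j then 1 else 0 := by
  by_cases h : ∀ j ∈ s, f j = g j
  · rw [if_pos h]
    exact Finset.prod_eq_one fun j hj => by rw [if_pos (h j hj)]
  · rw [if_neg h]
    push_neg at h
    obtain ⟨j, hj, hne⟩ := h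
    exact Finset.prod_eq_zero hj (by rw [if_neg hne])

lemma site_PX_apply {N : ℕ} (i : Fin N) (f g : Fin N → Fin 2) :
    site N i PX f g = if g = Function.update f i (f i + 1) then 1 else 0 := by
  show PX (f i) (g i) * _ = _
  rw [hPX, prod_delta]
  have hcond : (g = Function.update f i (f i + 1)) ↔
      (g i = f i + 1 ∧ ∀ j ∈ Finset.univ.erase i, f j = g j) := by
    rw [Function.eq_update_iff]
    constructor
    · rintro ⟨h1, h2⟩
      exact ⟨h1, fun j hj => ((h2 j (Finset.mem_erase.mp hj).1)).symm⟩
    · rintro ⟨h1, h2⟩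
      exact ⟨h1, fun j hj => (h2 j (Finset.mem_erase.mpr ⟨hj, Finset.mem_univ j⟩)).symm⟩
  by_cases h1 : g i = f i + 1 <;> by_cases h2 : ∀ j ∈ Finset.univ.erase i, f j = g j <;>
    simp [h1, h2, hcond]

lemma site_PZ_eq {N : ℕ} (i : Fin N) :
    site N i PZ = Matrix.diagonal (fun f => ee (f i)) := by
  ext f g
  show PZ (f i) (g i) * _ = _
  rw [hPZ, prod_delta, Matrix.diagonal_apply]
  have hcond : (f = g) ↔ (g i = f i ∧ ∀ j ∈ Finset.univ.erase i, f j = g j) := by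
    constructor
    · rintro rfl; exact ⟨rfl, fun j _ => rfl⟩
    · rintro ⟨h1, h2⟩
      funext j
      by_cases hj : j = i
      · rw [hj, h1]
      · exact h2 j (Finset.mem_erase.mpr ⟨hj, Finset.mem_univ j⟩)
  by_cases h1 : g i = f i <;> by_cases h2 : ∀ j ∈ Finset.univ.erase i, f j = g j <;>
    simp [h1, h2, hcond]

lemma ZXlayer_apply {N : ℕ} (f g : Fin N → Fin 2) :
    ZXlayer N f g = if g = flipAll f then eps N f else 0 := by
  show (∏ i : Fin N, (PZ * PX) (f i) (g i)) = _
  by_cases h : g = flipAll f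
  · rw [if_pos h]
    subst h
    exact Finset.prod_congr rfl fun i _ => by rw [hM, if_pos (show flipAll f i = f i + 1 from rfl)]
  · rw [if_neg h]
    have : ∃ i, g i ≠ f i + 1 := by
      by_contra hc
      push_neg at hc
      exact h (funext hc)
    obtain ⟨i, hi⟩ := this
    exact Finset.prod_eq_zero (Finset.mem_univ i) (by rw [hM, if_neg hi])

lemma UCZY_apply (N : ℕ) [NeZero N] (f g : Fin N → Fin 2) :
    UCZY N f g = if g = flipAll f then cc N f * eps N f else 0 := by
  unfold UCZY CZlayer
  rw [Matrix.diagonal_mul, ZXlayer_apply, mul_ite, mul_zero]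
  rfl

lemma ham_apply (N : ℕ) [NeZero N] (f g : Fin N → Fin 2) :
    ham N f g = ∑ i : Fin N,
      (if g = Function.update f i (f i + 1) then
        1 - ee (f (i - 1)) * ee (g (i + 1)) else 0) := by
  unfold ham
  rw [Matrix.sum_apply]
  refine Finset.sum_congr rfl fun i _ => ?_
  rw [Matrix.sub_apply, site_PZ_eq, site_PZ_eq, Matrix.mul_diagonal, Matrix.diagonal_mul,
    site_PX_apply]
  by_cases h : g = Function.update f i (f i + 1) <;> simp [h] <;> ring


lemma eps_update {N : ℕ} (f : Fin N → Fin 2) (i : Fin N) :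
    eps N (Function.update f i (f i + 1)) = -eps N f := by
  unfold eps
  have h1 : ∀ j, ee (Function.update f i (f i + 1) j) =
      Function.update (fun j => ee (f j)) i (ee (f i + 1)) j := by
    intro j
    by_cases hj : j = i
    · subst hj; rw [Function.update_self, Function.update_self]
    · rw [Function.update_of_ne hj, Function.update_of_ne hj]
  rw [Finset.prod_congr rfl fun j _ => h1 j,
    Finset.prod_update_of_mem (Finset.mem_univ i),
    Finset.prod_eq_mul_prod_sdiff_singleton_of_mem (Finset.mem_univ i) (fun j => ee (f j)),
    ee_add_one, neg_mul]

lemma cc_mul_self (N : ℕ) [NeZero N] (f : Fin N → Fin 2) : cc N f * cc N f = 1 := by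
  unfold cc
  rw [← Finset.prod_mul_distrib]
  exact Finset.prod_eq_one fun j _ => tt_sq _ _

lemma tt_id1 (b : Fin 2) : tt (b + 1) (b + 1) * tt b b = ee b * ee (b + 1) := by
  fin_cases b <;> simp [tt, ee]

lemma tt_id2 (a b c : Fin 2) :
    tt a (b + 1) * tt a b * (tt (b + 1) c * tt b c) = ee a * ee c := by
  fin_cases a <;> fin_cases b <;> fin_cases c <;> simp [tt, ee]

lemma cc_update {N : ℕ} [NeZero N] (f : Fin N → Fin 2) (i : Fin N) :
    cc N (Function.update f i (f i + 1)) =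
      ee (f (i - 1)) * ee (Function.update f i (f i + 1) (i + 1)) * cc N f := by
  set h := Function.update f i (f i + 1) with hh
  have hi : h i = f i + 1 := Function.update_self i (f i + 1) f
  have hkey : cc N h * cc N f = ee (f (i - 1)) * ee (h (i + 1)) := by
    unfold cc
    rw [← Finset.prod_mul_distrib]
    rw [← Finset.prod_subset (Finset.subset_univ ({i - 1, i} : Finset (Fin N)))
      (fun j _ hj => ?_)]
    swap
    · simp only [Finset.mem_insert, Finset.mem_singleton, not_or] at hj
      obtain ⟨hj1, hj2⟩ := hj
      have e1 : h j = f j := Function.update_of_ne hj2 _ f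
      have e2 : h (j + 1) = f (j + 1) := by
        refine Function.update_of_ne (fun hc => hj1 ?_) _ f
        rw [← hc, add_sub_cancel_right]
      rw [e1, e2, tt_sq]
    by_cases hNe : (i - 1 : Fin N) = i
    · have hadd : i + 1 = i := by
        conv_lhs => rw [← hNe]
        exact sub_add_cancel i 1
      rw [hNe, Finset.pair_eq_singleton, Finset.prod_singleton, hadd, hi]
      exact tt_id1 (f i)
    · have hadd : i + 1 ≠ i := by
        intro hc
        have h2 := congrArg (· - 1) hc
        simp only [add_sub_cancel_right] at h2
        exact hNe h2.symm
      rw [Finset.prod_pair hNe]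
      have e1 : h (i - 1) = f (i - 1) := Function.update_of_ne hNe _ f
      have e2 : h (i - 1 + 1) = h i := by rw [sub_add_cancel]
      have e3 : h (i + 1) = f (i + 1) := Function.update_of_ne hadd _ f
      rw [e1, e2, e3, hi, sub_add_cancel]
      exact tt_id2 (f (i - 1)) (f i) (f (i + 1))
  calc cc N h = cc N h * (cc N f * cc N f) := by rw [cc_mul_self, mul_one]
    _ = (cc N h * cc N f) * cc N f := by ring
    _ = ee (f (i - 1)) * ee (h (i + 1)) * cc N f := by rw [hkey]

lemma key (N : ℕ) [NeZero N] (f g : Fin N → Fin 2) (i : Fin N) :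
    cc N f * eps N f *
      (if g = Function.update (flipAll f) i (flipAll f i + 1) then
        1 - ee (flipAll f (i - 1)) * ee (g (i + 1)) else 0)
    = (if flipAll g = Function.update f i (f i + 1) then
        1 - ee (f (i - 1)) * ee (flipAll g (i + 1)) else 0) *
      (cc N (flipAll g) * eps N (flipAll g)) := by
  set h := Function.update f i (f i + 1) with hh
  have hflip : flipAll h = Function.update (flipAll f) i (flipAll f i + 1) := by
    funext j
    show h j + 1 = Function.update (flipAll f) i (flipAll f i + 1) j
    by_cases hj : j = i
    · rw [hj, Function.update_self, hh, Function.update_self]; rfl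
    · rw [Function.update_of_ne hj, hh, Function.update_of_ne hj]; rfl
  have hcond : (g = Function.update (flipAll f) i (flipAll f i + 1)) ↔ (flipAll g = h) := by
    rw [← hflip]
    constructor
    · rintro rfl; exact flip_flip h
    · rintro hgh; rw [← hgh, flip_flip]
  by_cases hc : flipAll g = h
  · rw [if_pos (hcond.mpr hc), if_pos hc]
    have hg : g = flipAll h := by rw [← hc, flip_flip]
    have r1 : ee (flipAll f (i - 1)) = -ee (f (i - 1)) := ee_add_one _
    have r2 : ee (g (i + 1)) = -ee (h (i + 1)) := by rw [hg]; exact ee_add_one _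
    have r3 : ee (flipAll g (i + 1)) = ee (h (i + 1)) := by rw [hc]
    have r4 : cc N (flipAll g) = ee (f (i - 1)) * ee (h (i + 1)) * cc N f := by
      rw [hc, hh]; exact cc_update f i
    have r5 : eps N (flipAll g) = -eps N f := by rw [hc, hh]; exact eps_update f i
    rw [r1, r2, r3, r4, r5]
    have ha : ee (f (i - 1)) * ee (f (i - 1)) = 1 := ee_sq _
    have hb : ee (h (i + 1)) * ee (h (i + 1)) = 1 := ee_sq _
    linear_combination (-(cc N f * eps N f * ee (h (i + 1)) * ee (h (i + 1)))) * ha +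
      (-(cc N f * eps N f)) * hb
  · rw [if_neg (fun hx => hc (hcond.mp hx)), if_neg hc, mul_zero, zero_mul]

end LGaux

open LGaux in
/-- For each positive integer `N`, `U_CZY` commutes with the Levin-Gu edge Hamiltonian. -/
theorem UCZY_commutes_with_ham (N : ℕ) [NeZero N] :
    UCZY N * ham N = ham N * UCZY N := by
  ext f g
  rw [Matrix.mul_apply, Matrix.mul_apply]
  have hL : ∀ h : Fin N → Fin 2, UCZY N f h * ham N h g =
      if h = flipAll f then cc N f * eps N f * ham N h g else 0 := by
    intro h; rw [UCZY_apply, ite_mul, zero_mul]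
  have hR : ∀ h : Fin N → Fin 2, ham N f h * UCZY N h g =
      if h = flipAll g then ham N f h * (cc N h * eps N h) else 0 := by
    intro h
    rw [UCZY_apply]
    have : (g = flipAll h) ↔ (h = flipAll g) := by
      constructor
      · rintro rfl; exact (flip_flip h).symm
      · rintro rfl; exact (flip_flip g).symm
    by_cases hcc : h = flipAll g
    · rw [if_pos hcc, if_pos (this.mpr hcc)]
    · rw [if_neg hcc, if_neg (fun hx => hcc (this.mp hx)), mul_zero]
  calc ∑ h, UCZY N f h * ham N h g
      = ∑ h, if h = flipAll f then cc N f * eps N f * ham N h g else 0 :=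
        Finset.sum_congr rfl fun h _ => hL h
    _ = cc N f * eps N f * ham N (flipAll f) g := by
        rw [Finset.sum_ite_eq' Finset.univ (flipAll f)
          (fun h => cc N f * eps N f * ham N h g), if_pos (Finset.mem_univ _)]
    _ = ham N f (flipAll g) * (cc N (flipAll g) * eps N (flipAll g)) := by
        rw [ham_apply, ham_apply, Finset.mul_sum, Finset.sum_mul]
        exact Finset.sum_congr rfl fun i _ => key N f g i
    _ = ∑ h, if h = flipAll g then ham N f h * (cc N h * eps N h) else 0 := by
        rw [Finset.sum_ite_eq' Finset.univ (flipAll g)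
          (fun h => ham N f h * (cc N h * eps N h)), if_pos (Finset.mem_univ _)]
    _ = ∑ h, ham N f h * UCZY N h g := Finset.sum_congr rfl fun h _ => (hR h).symm
end
end

section
/- The operator U_CZY = (∏_{i=1}^{N} CZ_{i,i+1})·(∏_{i=1}^{N} Z_i X_i) on (ℂ²)^{⊗N} with periodic boundary conditions satisfies U_CZY² = 𝟙 for every even N, so it generates a ℤ₂ symmetry. -/
open Matrix Finset

noncomputable section

lemma PZX : PZ * PX = !![0, 1; -1, 0] := by
  simp [PZ, PX, Matrix.mul_fin_two]

lemma PZX_succ (a : Fin 2) : (PZ * PX) a (a + 1) = (if a = 1 then (-1 : ℂ) else 1) := by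
  fin_cases a <;> simp [PZX]

lemma PZX_diag (a : Fin 2) : (PZ * PX) a a = 0 := by
  fin_cases a <;> simp [PZX]

/-- closed form for `ZXlayer` entries -/
lemma ZX_apply (N : ℕ) (f g : Fin N → Fin 2) :
    ZXlayer N f g =
      if g = (fun i => f i + 1) then ∏ i : Fin N, (if f i = 1 then (-1 : ℂ) else 1) else 0 := by
  by_cases h : g = fun i => f i + 1
  · subst h
    simp only [ZXlayer, Matrix.of_apply, if_pos rfl]
    exact Finset.prod_congr rfl fun i _ => PZX_succ (f i)
  · rw [if_neg h]
    obtain ⟨i, hi⟩ : ∃ i, g i ≠ f i + 1 := by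
      by_contra hc
      push_neg at hc
      exact h (funext hc)
    have hgi : g i = f i := by omega
    refine Finset.prod_eq_zero (Finset.mem_univ i) ?_
    rw [hgi]; exact PZX_diag (f i)

lemma U_apply (N : ℕ) [NeZero N] (f g : Fin N → Fin 2) :
    UCZY N f g =
      if g = (fun i => f i + 1) then
        (∏ i : Fin N, (if f i = 1 ∧ f (i + 1) = 1 then (-1 : ℂ) else 1)) *
          ∏ i : Fin N, (if f i = 1 then (-1 : ℂ) else 1)
      else 0 := by
  have : UCZY N f g =
      (∏ i : Fin N, (if f i = 1 ∧ f (i + 1) = 1 then (-1 : ℂ) else 1)) * ZXlayer N f g := by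
    simp [UCZY, CZlayer, Matrix.diagonal_mul]
  rw [this, ZX_apply]
  split <;> simp

lemma site_key (a b : Fin 2) :
    (if a = 1 ∧ b = 1 then (-1 : ℂ) else 1) * (if a + 1 = 1 ∧ b + 1 = 1 then (-1 : ℂ) else 1) *
      ((if a = 1 then (-1 : ℂ) else 1) * (if a + 1 = 1 then (-1 : ℂ) else 1)) =
    (if a = 1 then (-1 : ℂ) else 1) * (if b = 1 then (-1 : ℂ) else 1) := by
  fin_cases a <;> fin_cases b <;>
    norm_num [show ((0 : Fin 2) : Fin 2) + 1 = 1 from rfl, show (1 : Fin 2) + 1 = 0 from rfl]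

/-- For every even `N`, `U_CZY² = 𝟙` on `(ℂ²)^{⊗N}`, so `U_CZY` generates a `ℤ₂` symmetry. -/
theorem UCZY_sq_eq_one (N : ℕ) [NeZero N] (hN : Even N) :
    UCZY N ^ 2 = 1 := by
  rw [pow_two]
  ext f h
  rw [Matrix.mul_apply]
  simp only [U_apply]
  rw [Finset.sum_eq_single (fun i => f i + 1)]
  · have hff : (fun i => (f i + 1) + 1) = f := by funext i; omega
    rw [if_pos rfl]
    simp only [hff]
    by_cases hh : h = f
    · rw [if_pos hh, Matrix.one_apply, if_pos hh.symm]
      -- the scalar identity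
      rw [mul_mul_mul_comm, ← Finset.prod_mul_distrib, ← Finset.prod_mul_distrib,
        ← Finset.prod_mul_distrib]
      rw [Finset.prod_congr rfl fun i _ => site_key (f i) (f (i + 1)), Finset.prod_mul_distrib]
      have h2 : (∏ i : Fin N, (if f (i + 1) = 1 then (-1 : ℂ) else 1)) =
          ∏ i : Fin N, (if f i = 1 then (-1 : ℂ) else 1) :=
        Fintype.prod_equiv (Equiv.addRight 1) _ _ fun i => rfl
      rw [h2, ← Finset.prod_mul_distrib]
      refine Finset.prod_eq_one fun i _ => ?_
      by_cases hfi : f i = 1 <;> simp [hfi]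
    · rw [if_neg hh, Matrix.one_apply_ne (fun he => hh he.symm), mul_zero]
  · intro g _ hg
    rw [if_neg hg, zero_mul]
  · simp
end
end

section
/- With the 3×3 matrices A₀^{00} = [[0,−1,1],[0,1,−1],[0,0,0]] and A₀^{11} = [[0,1,1],[0,1,1],[0,0,0]] (all other components zero), the algebra of 3×3 matrices generated by {A₀^{00}, A₀^{11}} is a proper subalgebra of M₃(ℂ), i.e. the MPO tensor A₀ is not injective. -/
open Matrix

noncomputable section

/-- The nonzero component `A₀^{00}` of the MPO tensor `A₀`. -/
def A000 : Matrix (Fin 3) (Fin 3) ℂ := !![0, -1, 1; 0, 1, -1; 0, 0, 0]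

/-- The nonzero component `A₀^{11}` of the MPO tensor `A₀`. -/
def A011 : Matrix (Fin 3) (Fin 3) ℂ := !![0, 1, 1; 0, 1, 1; 0, 0, 0]

/-- Matrices whose first column vanishes form a non-unital subalgebra. -/
def firstColZero : NonUnitalSubalgebra ℂ (Matrix (Fin 3) (Fin 3) ℂ) where
  carrier := {M | ∀ i, M i 0 = 0}
  add_mem' := by intro a b ha hb i; simp [Matrix.add_apply, ha i, hb i]
  zero_mem' := by intro i; simp
  mul_mem' := by
    intro a b _ hb i
    simp [Matrix.mul_apply]
    exact Finset.sum_eq_zero fun k _ => by rw [hb k, mul_zero]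
  smul_mem' := by intro c a ha i; simp [Matrix.smul_apply, ha i]

/-- The (non-unital) subalgebra of `M₃(ℂ)` generated by `{A₀^{00}, A₀^{11}}` is a proper
subalgebra, i.e. the MPO tensor `A₀` is not injective. -/
theorem A0_not_injective :
    NonUnitalAlgebra.adjoin ℂ ({A000, A011} : Set (Matrix (Fin 3) (Fin 3) ℂ)) ≠ ⊤ := by
  intro h
  have hle : NonUnitalAlgebra.adjoin ℂ ({A000, A011} : Set (Matrix (Fin 3) (Fin 3) ℂ))
      ≤ firstColZero := by
    apply NonUnitalAlgebra.adjoin_le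
    rintro M (rfl | rfl) <;> intro i <;> fin_cases i <;>
      simp [A000, A011, firstColZero, Matrix.vecHead, Matrix.vecTail]
  have h1 : (1 : Matrix (Fin 3) (Fin 3) ℂ) ∈ firstColZero := by
    apply hle; rw [h]; trivial
  have := h1 0
  simp [Matrix.one_apply] at this
end
end

section
/- In the unitization 𝒜*₊ of 𝒜*, the left ideal 𝒜*₊·E₂ generated by the idempotent E₂ = E_{4,4} is a 2-dimensional simple left 𝒜*₊-module, spanned by the matrix units E_{4,4} and E_{5,4}. -/
open Matrix

noncomputable section

/-- The allowed matrix positions (0-indexed versions of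
`(1,2),(1,3),(2,2),(2,3),(4,4),(4,5),(5,4),(5,5)`). -/
def positions : Finset (Fin 5 × Fin 5) :=
  {(0, 1), (0, 2), (1, 1), (1, 2), (3, 3), (3, 4), (4, 3), (4, 4)}

/-- The algebra `𝒜* ⊆ M₅(ℂ)`: matrices supported on the allowed positions. -/
def AstarSet : Set (Matrix (Fin 5) (Fin 5) ℂ) :=
  {M | ∀ i j, (i, j) ∉ positions → M i j = 0}

/-- The unitization `𝒜*₊ = 𝒜* ⊕ ℂ·𝟙₅`, realized as the subalgebra of `M₅(ℂ)`
generated by `𝒜*`. -/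
def AstarPlus : Subalgebra ℂ (Matrix (Fin 5) (Fin 5) ℂ) := Algebra.adjoin ℂ AstarSet

/-- The subspace spanned by the matrix units `E_{4,4}` and `E_{5,4}` (0-indexed `(3,3)`,
`(4,3)`). -/
def P2mod : Submodule ℂ (Matrix (Fin 5) (Fin 5) ℂ) :=
  Submodule.span ℂ {Matrix.single 3 3 (1 : ℂ), Matrix.single 4 3 (1 : ℂ)}

/-!
Every element of `𝒜*₊` maps the coordinate plane `span {e₄, e₅}` into itself, so left
multiplication by `𝒜*₊` preserves the column space `span {E₄₄, E₅₄}`, and right multiplication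
by `E₄₄` maps `𝒜*₊` onto it. The four matrix units `E_{ij}`, `i, j ∈ {4, 5}`, lie in `𝒜*` and act
on this column space as `M₂(ℂ)` acts on `ℂ²`; any nonzero vector is sent by them onto both basis
vectors, which gives simplicity.
-/

open Submodule

namespace Matrix

variable {n : Type*} [DecidableEq n]

theorem mul_single_one_eq_sum [Fintype n] {R : Type*} [Semiring R] (M : Matrix n n R)
    (j k : n) : M * single j k 1 = ∑ i, single i k (M i j) := by
  ext a b
  by_cases hb : k = b <;> simp [mul_apply, single_apply, Matrix.sum_apply, hb]

/-- The matrices mapping the coordinate subspace spanned by the `e s`, `s ∈ S`, into itself. -/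
def coordStabilizer [Fintype n] (R : Type*) [CommSemiring R] (S : Set n) :
    Subalgebra R (Matrix n n R) where
  carrier := {M | ∀ i j, j ∈ S → i ∉ S → M i j = 0}
  mul_mem' {A B} hA hB i j hj hi := by
    refine Finset.sum_eq_zero fun l _ => ?_
    by_cases hl : l ∈ S
    · simp [hA i l hl hi]
    · simp [hB l j hj hl]
  add_mem' hA hB i j hj hi := by simp [hA i j hj hi, hB i j hj hi]
  algebraMap_mem' r i j hj hi := by
    simp [algebraMap_matrix_apply, (ne_of_mem_of_not_mem hj hi).symm]

section Pair

variable {R : Type*} {p q k : n}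

theorem single_mem_span_pair_single [Semiring R] {i : n} (hi : i ∈ ({p, q} : Set n)) (c : R) :
    single i k c ∈ span R {single p k (1 : R), single q k 1} := by
  rw [← mul_one c, ← smul_eq_mul, ← smul_single]
  exact smul_mem _ _ (subset_span (by rcases hi with rfl | rfl <;> simp))

theorem mul_mem_span_pair_single [Fintype n] [CommSemiring R] {M : Matrix n n R}
    (hM : M ∈ coordStabilizer R {p, q}) {t : Matrix n n R}
    (ht : t ∈ span R {single p k 1, single q k 1}) :
    M * t ∈ span R {single p k (1 : R), single q k 1} := by
  suffices h : span R {single p k 1, single q k 1} ≤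
      (span R {single p k (1 : R), single q k 1}).comap (LinearMap.mulLeft R M) from h ht
  rw [span_le]
  intro s hs
  obtain ⟨j, hj, rfl⟩ : ∃ j ∈ ({p, q} : Set n), single j k 1 = s := by
    rcases hs with rfl | rfl <;> simp
  rw [SetLike.mem_coe, mem_comap, LinearMap.mulLeft_apply, mul_single_one_eq_sum]
  refine sum_mem fun i _ => ?_
  by_cases hi : i ∈ ({p, q} : Set n)
  · exact single_mem_span_pair_single hi _
  · simp [hM i j hj hi]

theorem mul_single_self_of_mem_span_pair_single [Fintype n] [Semiring R] {t : Matrix n n R}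
    (ht : t ∈ span R {single p k 1, single q k 1}) : t * single k k 1 = t := by
  induction ht using span_induction with
  | mem s hs => rcases hs with rfl | rfl <;> simp
  | zero => simp
  | add s u _ _ hs hu => rw [add_mul, hs, hu]
  | smul c s _ hs => rw [smul_mul_assoc, hs]

theorem finrank_span_pair_single {K : Type*} [Field K] (hpq : p ≠ q) :
    Module.finrank K (span K {single p k (1 : K), single q k 1}) = 2 := by
  classical
  have hne : single p k (1 : K) ≠ single q k 1 := fun h => by
    simpa [single_apply, hpq.symm] using congrFun (congrFun h p) k
  rw [← Finset.coe_pair, finrank_span_finset_eq_card, Finset.card_pair hne]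
  rw [Finset.coe_pair]
  refine linearIndepOn_id_pair (fun h => by simpa using congrFun (congrFun h p) k) fun c h => ?_
  simpa [single_apply, hpq] using congrFun (congrFun h q) k

theorem eq_bot_or_eq_span_pair_single {K : Type*} [Field K] [Fintype n] (hpq : p ≠ q)
    {T : Submodule K (Matrix n n K)} (hT : T ≤ span K {single p k 1, single q k 1})
    (hmul : ∀ i ∈ ({p, q} : Set n), ∀ j ∈ ({p, q} : Set n), ∀ t ∈ T, single i j 1 * t ∈ T) :
    T = ⊥ ∨ T = span K {single p k 1, single q k 1} := by
  refine or_iff_not_imp_left.2 fun hbot => le_antisymm hT ?_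
  obtain ⟨t, htT, ht0⟩ := exists_mem_ne_zero_of_ne_bot hbot
  obtain ⟨a, b, rfl⟩ := mem_span_pair.1 (hT htT)
  -- `E_{ij}` sends a matrix supported in column `k` with `j`-th entry `c` to `c • E_{ik}`.
  suffices h : ∀ j ∈ ({p, q} : Set n), ∀ c : K, c ≠ 0 →
      (∀ i : n, single i j (1 : K) * (a • single p k 1 + b • single q k 1) = c • single i k 1) →
      span K {single p k 1, single q k 1} ≤ T by
    by_cases ha : a = 0
    · refine h q (by simp) b (by rintro rfl; simp [ha] at ht0) fun i => ?_
      simp [mul_add, hpq.symm]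
    · refine h p (by simp) a ha fun i => ?_
      simp [mul_add, hpq]
  intro j hj c hc hjt
  have hunit : ∀ i ∈ ({p, q} : Set n), single i k 1 ∈ T := fun i hi => by
    have h := T.smul_mem c⁻¹ (hmul i hi j hj _ htT)
    rwa [hjt, smul_smul, inv_mul_cancel₀ hc, one_smul] at h
  exact span_le.2 (Set.pair_subset (hunit p (by simp)) (hunit q (by simp)))

end Pair

end Matrix

theorem AstarSet_subset_coordStabilizer :
    AstarSet ⊆ (coordStabilizer ℂ ({3, 4} : Set (Fin 5)) : Set (Matrix (Fin 5) (Fin 5) ℂ)) := by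
  intro M hM i j hj hi
  apply hM
  simp only [Set.mem_insert_iff, Set.mem_singleton_iff] at hi hj
  rcases hj with rfl | rfl <;> fin_cases i <;> simp_all [positions]

theorem AstarPlus_le_coordStabilizer : AstarPlus ≤ coordStabilizer ℂ ({3, 4} : Set (Fin 5)) :=
  Algebra.adjoin_le AstarSet_subset_coordStabilizer

theorem single_mem_AstarPlus {i j : Fin 5} (hi : i ∈ ({3, 4} : Set (Fin 5)))
    (hj : j ∈ ({3, 4} : Set (Fin 5))) : single i j (1 : ℂ) ∈ AstarPlus := by
  refine Algebra.subset_adjoin fun a b hab => ?_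
  rw [single_apply, if_neg]
  rintro ⟨rfl, rfl⟩
  rcases hi with rfl | rfl <;> rcases hj with rfl | rfl <;> exact hab (by decide)

/-- The left ideal `𝒜*₊·E₂` generated by the idempotent `E₂ = E_{4,4}` is a 2-dimensional
simple left `𝒜*₊`-module, spanned by `E_{4,4}` and `E_{5,4}`. -/
theorem P2_is_simple :
    (P2mod : Set (Matrix (Fin 5) (Fin 5) ℂ)) =
      (fun x => x * Matrix.single 3 3 (1 : ℂ)) '' (AstarPlus : Set (Matrix (Fin 5) (Fin 5) ℂ)) ∧
    Module.finrank ℂ P2mod = 2 ∧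
    (∀ a ∈ AstarPlus, ∀ t ∈ P2mod, a * t ∈ P2mod) ∧
    P2mod ≠ ⊥ ∧
    (∀ T : Submodule ℂ (Matrix (Fin 5) (Fin 5) ℂ), T ≤ P2mod →
      (∀ a ∈ AstarPlus, ∀ t ∈ T, a * t ∈ T) → T = ⊥ ∨ T = P2mod) := by
  have hmul (a) (ha : a ∈ AstarPlus) {t} (ht : t ∈ P2mod) : a * t ∈ P2mod :=
    mul_mem_span_pair_single (AstarPlus_le_coordStabilizer ha) ht
  have hrank : Module.finrank ℂ P2mod = 2 := finrank_span_pair_single (by decide)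
  refine ⟨?_, hrank, hmul, ?_, fun T hT hT_mul => ?_⟩
  · ext x
    constructor
    · intro hx
      have hP2 : P2mod ≤ Subalgebra.toSubmodule AstarPlus :=
        span_le.2 (Set.pair_subset (single_mem_AstarPlus (by simp) (by simp))
          (single_mem_AstarPlus (by simp) (by simp)))
      exact ⟨x, hP2 hx, mul_single_self_of_mem_span_pair_single hx⟩
    · rintro ⟨a, ha, rfl⟩
      exact hmul a ha (subset_span (by simp))
  · rw [Ne, ← Submodule.finrank_eq_zero, hrank]
    decide
  · exact eq_bot_or_eq_span_pair_single (by decide) hT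
      fun i hi j hj => hT_mul _ (single_mem_AstarPlus hi hj)
end
end

section
/- Suppose fusion multiplicities N_{ab}^c ∈ ℕ on a finite index set I are associative and transitive (for all a,b there exist c,d with N_{ac}^d > 0 and N_{da}^b > 0). Let v be a strictly positive common eigenvector of all left-multiplication matrices N_a with N_a v = d_a v. Then d_a d_b = ∑_c N_{ab}^c d_c for all a,b ∈ I, and each d_a equals the spectral radius of N_a. -/
open Matrix Finset

lemma mem_spectrum_iff_eigen {I : Type*} [Fintype I] [DecidableEq I]
    (μ : ℂ) (M : Matrix I I ℂ) :
    μ ∈ spectrum ℂ M ↔ ∃ w ≠ 0, M.mulVec w = μ • w := by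
  rw [spectrum.mem_iff, Matrix.isUnit_iff_isUnit_det, isUnit_iff_ne_zero, not_ne_iff,
    ← Matrix.exists_mulVec_eq_zero_iff]
  constructor
  · rintro ⟨w, hw, h⟩
    refine ⟨w, hw, ?_⟩
    rw [Matrix.sub_mulVec] at h
    have h2 : (algebraMap ℂ (Matrix I I ℂ) μ).mulVec w = μ • w := by
      rw [Algebra.algebraMap_eq_smul_one, Matrix.smul_mulVec, Matrix.one_mulVec]
    rw [h2, sub_eq_zero] at h
    exact h.symm
  · rintro ⟨w, hw, h⟩
    refine ⟨w, hw, ?_⟩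
    rw [Matrix.sub_mulVec, h, Algebra.algebraMap_eq_smul_one, Matrix.smul_mulVec,
      Matrix.one_mulVec, sub_self]

/-- Suppose fusion multiplicities `N_{ab}^c ∈ ℕ` on a finite index set `I` are associative
and transitive, and `v` is a strictly positive common eigenvector of all left-multiplication
matrices `(N_a)_{cb} = N_{ab}^c` with `N_a v = d_a v`. Then `d_a d_b = ∑_c N_{ab}^c d_c`
for all `a,b`, and each `d_a` equals the spectral radius of `N_a`. -/
theorem fusion_dimensions
    {I : Type*} [Fintype I] [DecidableEq I] [Nonempty I] (N : I → I → I → ℕ)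
    (hassoc : ∀ a b c d : I,
      ∑ e : I, N a b e * N e c d = ∑ f : I, N a f d * N b c f)
    (htrans : ∀ a b : I, ∃ c d : I, 0 < N a c d ∧ 0 < N d a b)
    (v : I → ℝ) (hv : ∀ i, 0 < v i) (d : I → ℝ)
    (heig : ∀ a : I,
      (Matrix.of fun x y => (N a y x : ℝ) : Matrix I I ℝ).mulVec v = d a • v) :
    (∀ a b : I, d a * d b = ∑ c : I, (N a b c : ℝ) * d c) ∧
    (∀ a : I,
      ((d a : ℂ) ∈ spectrum ℂ (Matrix.of fun x y => (N a y x : ℂ) : Matrix I I ℂ)) ∧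
      ∀ μ ∈ spectrum ℂ (Matrix.of fun x y => (N a y x : ℂ) : Matrix I I ℂ), ‖μ‖ ≤ d a) := by
  have heig' : ∀ a i, ∑ x, (N a x i : ℝ) * v x = d a * v i := by
    intro a i
    have := congrFun (heig a) i
    simpa [Matrix.mulVec, dotProduct] using this
  constructor
  · intro a b
    obtain ⟨i⟩ := ‹Nonempty I›
    have key : (d a * d b) * v i = (∑ c, (N a b c : ℝ) * d c) * v i := by
      calc (d a * d b) * v i = d b * (d a * v i) := by ring
        _ = ∑ x, (N a x i : ℝ) * (d b * v x) := by
            rw [← heig' a i, Finset.mul_sum]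
            exact Finset.sum_congr rfl fun x _ => by ring
        _ = ∑ x, ∑ y, (N a x i : ℝ) * ((N b y x : ℝ) * v y) := by
            refine Finset.sum_congr rfl fun x _ => ?_
            rw [← heig' b x, Finset.mul_sum]
        _ = ∑ y, (∑ x, (N a x i : ℝ) * (N b y x : ℝ)) * v y := by
            rw [Finset.sum_comm]
            refine Finset.sum_congr rfl fun y _ => ?_
            rw [Finset.sum_mul]
            exact Finset.sum_congr rfl fun x _ => by ring
        _ = ∑ y, (∑ c, (N a b c : ℝ) * (N c y i : ℝ)) * v y := by
            refine Finset.sum_congr rfl fun y _ => ?_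
            congr 1
            exact_mod_cast (hassoc a b y i).symm
        _ = ∑ c, (N a b c : ℝ) * (∑ y, (N c y i : ℝ) * v y) := by
            simp_rw [Finset.sum_mul, Finset.mul_sum]
            rw [Finset.sum_comm]
            exact Finset.sum_congr rfl fun c _ => Finset.sum_congr rfl fun y _ => by ring
        _ = ∑ c, (N a b c : ℝ) * (d c * v i) := by
            exact Finset.sum_congr rfl fun c _ => by rw [heig' c i]
        _ = (∑ c, (N a b c : ℝ) * d c) * v i := by
            rw [Finset.sum_mul]
            exact Finset.sum_congr rfl fun c _ => by ring
    exact mul_right_cancel₀ (ne_of_gt (hv i)) key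
  · intro a
    set M : Matrix I I ℂ := Matrix.of fun x y => (N a y x : ℂ) with hM
    have hMmul : ∀ (w : I → ℂ) (i : I), M.mulVec w i = ∑ x, (N a x i : ℂ) * w x := by
      intro w i
      simp [hM, Matrix.mulVec, dotProduct]
    constructor
    · rw [mem_spectrum_iff_eigen]
      refine ⟨fun i => (v i : ℂ), ?_, ?_⟩
      · obtain ⟨i⟩ := ‹Nonempty I›
        intro h
        have := congrFun h i
        simp only [Pi.zero_apply, Complex.ofReal_eq_zero] at this
        exact (hv i).ne' this
      · funext i
        rw [hMmul]
        simp only [Pi.smul_apply, smul_eq_mul]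
        exact_mod_cast heig' a i
    · intro μ hμ
      rw [mem_spectrum_iff_eigen] at hμ
      obtain ⟨w, hw, hweq⟩ := hμ
      have hweq' : ∀ i, ∑ x, (N a x i : ℂ) * w x = μ * w i := by
        intro i
        have := congrFun hweq i
        rw [hMmul] at this
        simpa using this
      -- choose maximizer of ‖w i‖ / v i
      obtain ⟨i0, _, hi0⟩ := Finset.exists_max_image (Finset.univ : Finset I)
        (fun i => ‖w i‖ / v i) ⟨Classical.arbitrary I, Finset.mem_univ _⟩
      set r : ℝ := ‖w i0‖ / v i0 with hr
      have hrpos : 0 < r := by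
        obtain ⟨j, hj⟩ := Function.ne_iff.mp hw
        have hgj : 0 < ‖w j‖ / v j := div_pos (norm_pos_iff.mpr hj) (hv j)
        exact lt_of_lt_of_le hgj (hi0 j (Finset.mem_univ j))
      have hwle : ∀ x, ‖w x‖ ≤ r * v x := by
        intro x
        have := hi0 x (Finset.mem_univ x)
        rwa [div_le_iff₀ (hv x)] at this
      have hwi0 : ‖w i0‖ = r * v i0 := by
        rw [hr, div_mul_cancel₀]
        exact (hv i0).ne'
      have hbound : ‖μ‖ * (r * v i0) ≤ r * (d a * v i0) := by
        calc ‖μ‖ * (r * v i0) = ‖μ * w i0‖ := by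
              rw [norm_mul, hwi0]
          _ = ‖∑ x, (N a x i0 : ℂ) * w x‖ := by rw [hweq' i0]
          _ ≤ ∑ x, ‖(N a x i0 : ℂ) * w x‖ := norm_sum_le _ _
          _ = ∑ x, (N a x i0 : ℝ) * ‖w x‖ := by
              refine Finset.sum_congr rfl fun x _ => ?_
              rw [norm_mul]
              norm_num
          _ ≤ ∑ x, (N a x i0 : ℝ) * (r * v x) := by
              refine Finset.sum_le_sum fun x _ => ?_
              exact mul_le_mul_of_nonneg_left (hwle x) (Nat.cast_nonneg _)
          _ = r * ∑ x, (N a x i0 : ℝ) * v x := by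
              rw [Finset.mul_sum]
              exact Finset.sum_congr rfl fun x _ => by ring
          _ = r * (d a * v i0) := by rw [heig' a i0]
      have hpos : 0 < r * v i0 := mul_pos hrpos (hv i0)
      have hbound' : ‖μ‖ * (r * v i0) ≤ d a * (r * v i0) :=
        hbound.trans_eq (by ring)
      exact le_of_mul_le_mul_right hbound' hpos
end

section
/- Let G be a finite group and ω : G³ → U(1) a normalized 3-cocycle (ω(1,k,l) = ω(k,1,l) = ω(k,l,1) = 1). On the algebra 𝒜 = ⊕_g Span{ b_g^{k,h} := ω(g,k,k⁻¹h)·|gk,gh⟩⟨k,h| : k,h ∈ G } define Δ(b_g^{k,h}) = ∑_{l,m ∈ G} ω(g,l,l⁻¹m)·b_g^{k,l} ⊗ b_g^{m,h}. Then Δ is coassociative: (Δ ⊗ id)∘Δ = (id ⊗ Δ)∘Δ. -/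
noncomputable section

/- Elements of the algebra `𝒜 = ⊕_g Span{b_g^{k,h}}` are written in coordinates with
respect to the basis `b_g^{k,h} = ω(g,k,k⁻¹h)·|gk,gh⟩⟨k,h|`, indexed by `(g,k,h) ∈ G³`;
tensor squares and cubes of `𝒜` are written in coordinates with respect to the
corresponding tensor-product bases. -/

variable {G : Type*} [Group G] [DecidableEq G]

/-- The coproduct `Δ(b_g^{k,h}) = ∑_{l,m} ω(g,l,l⁻¹m)·b_g^{k,l} ⊗ b_g^{m,h}`, in
coordinates: the coefficient of `b_{g₁}^{k₁,h₁} ⊗ b_{g₂}^{k₂,h₂}` in `Δ x` is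
`δ_{g₁,g₂}·ω(g₁,h₁,h₁⁻¹k₂)·x(g₁,k₁,h₂)`. -/
def coprod (ω : G → G → G → ℂ) (x : G × G × G → ℂ) :
    (G × G × G) × (G × G × G) → ℂ := fun p =>
  if p.1.1 = p.2.1 then
    ω p.1.1 p.1.2.2 (p.1.2.2⁻¹ * p.2.2.1) * x (p.1.1, p.1.2.1, p.2.2.2)
  else 0

/-- `(Δ ⊗ id)` in coordinates. -/
def coprodLeft (ω : G → G → G → ℂ) (y : (G × G × G) × (G × G × G) → ℂ) :
    (G × G × G) × (G × G × G) × (G × G × G) → ℂ := fun t =>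
  if t.1.1 = t.2.1.1 then
    ω t.1.1 t.1.2.2 (t.1.2.2⁻¹ * t.2.1.2.1) * y ((t.1.1, t.1.2.1, t.2.1.2.2), t.2.2)
  else 0

/-- `(id ⊗ Δ)` in coordinates. -/
def coprodRight (ω : G → G → G → ℂ) (y : (G × G × G) × (G × G × G) → ℂ) :
    (G × G × G) × (G × G × G) × (G × G × G) → ℂ := fun t =>
  if t.2.1.1 = t.2.2.1 then
    ω t.2.1.1 t.2.1.2.2 (t.2.1.2.2⁻¹ * t.2.2.2.1) * y (t.1, (t.2.1.1, t.2.1.2.1, t.2.2.2.2))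
  else 0

/-- For a finite group `G` and a normalized `U(1)`-valued 3-cocycle `ω`, the coproduct
`Δ(b_g^{k,h}) = ∑_{l,m} ω(g,l,l⁻¹m)·b_g^{k,l} ⊗ b_g^{m,h}` on the algebra `𝒜` is
coassociative: `(Δ ⊗ id) ∘ Δ = (id ⊗ Δ) ∘ Δ`. -/
theorem coprod_coassoc
    {G : Type*} [Group G] [Fintype G] [DecidableEq G]
    (ω : G → G → G → ℂ)
    (hnorm : ∀ g k h, ‖ω g k h‖ = 1)
    (hone : ∀ k l, ω 1 k l = 1 ∧ ω k 1 l = 1 ∧ ω k l 1 = 1)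
    (hcoc : ∀ a b c d, ω b c d * ω a (b * c) d * ω a b c = ω (a * b) c d * ω a b (c * d)) :
    ∀ x : G × G × G → ℂ,
      coprodLeft ω (coprod ω x) = coprodRight ω (coprod ω x) := by
  intro x
  funext t
  obtain ⟨⟨g1, k1, h1⟩, ⟨g2, k2, h2⟩, ⟨g3, k3, h3⟩⟩ := t
  simp only [coprodLeft, coprodRight, coprod]
  split_ifs with h1' h2' h3' h4' h5' h6' <;> simp_all <;> ring
end
end

section
/- Let G be a finite group and ω a normalized 3-cocycle on G. On the algebra 𝒜 with basis {b_g^{k,h} = ω(g,k,k⁻¹h)|gk,gh⟩⟨k,h|} define the alternative coproduct Δ̂(b_g^{k,h}) = ∑_{l ∈ G} b_g^{k,l} ⊗ b_g^{l,h}. Then Δ̂ is coassociative, multiplicative (Δ̂(xy) = Δ̂(x)Δ̂(y)), and admits a counit ε(b_g^{k,h}) = δ_{k,h}, i.e. (ε ⊗ id)∘Δ̂ = (id ⊗ ε)∘Δ̂ = id. -/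
open Finset

noncomputable section

/- Elements of the algebra `𝒜` with basis `b_g^{k,h} = ω(g,k,k⁻¹h)·|gk,gh⟩⟨k,h|`
(indexed by `(g,k,h) ∈ G³`) are written in coordinates with respect to this basis;
tensor squares and cubes of `𝒜` use the corresponding tensor-product bases. -/

variable {G : Type*} [Group G] [DecidableEq G]

/-- The structure constants of the operator product on `𝒜`:
`b_g^{k,h}·b_{g'}^{k',h'} = δ_{k,g'k'} δ_{h,g'h'} ·
  ω(g,g'k',k'⁻¹h')·ω(g',k',k'⁻¹h')·ω(gg',k',k'⁻¹h')⁻¹ · b_{gg'}^{k',h'}`. -/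
def lam (ω : G → G → G → ℂ) (i j c : G × G × G) : ℂ :=
  if i.2.1 = j.1 * j.2.1 ∧ i.2.2 = j.1 * j.2.2 ∧ c = (i.1 * j.1, j.2.1, j.2.2) then
    ω i.1 (j.1 * j.2.1) (j.2.1⁻¹ * j.2.2) * ω j.1 j.2.1 (j.2.1⁻¹ * j.2.2) *
      (ω (i.1 * j.1) j.2.1 (j.2.1⁻¹ * j.2.2))⁻¹
  else 0

/-- The multiplication of `𝒜` in coordinates. -/
def mulA [Fintype G] (ω : G → G → G → ℂ) (x y : G × G × G → ℂ) : G × G × G → ℂ :=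
  fun c => ∑ i : G × G × G, ∑ j : G × G × G, x i * y j * lam ω i j c

/-- The componentwise multiplication of `𝒜 ⊗ 𝒜` in coordinates. -/
def mulAA [Fintype G] (ω : G → G → G → ℂ) (u v : (G × G × G) × (G × G × G) → ℂ) :
    (G × G × G) × (G × G × G) → ℂ := fun p =>
  ∑ i₁ : G × G × G, ∑ j₁ : G × G × G, ∑ i₂ : G × G × G, ∑ j₂ : G × G × G,
    u (i₁, i₂) * v (j₁, j₂) * lam ω i₁ j₁ p.1 * lam ω i₂ j₂ p.2

/-- The alternative coproduct `Δ̂(b_g^{k,h}) = ∑_l b_g^{k,l} ⊗ b_g^{l,h}` in coordinates. -/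
def coprodHat (x : G × G × G → ℂ) : (G × G × G) × (G × G × G) → ℂ := fun p =>
  if p.1.1 = p.2.1 ∧ p.1.2.2 = p.2.2.1 then x (p.1.1, p.1.2.1, p.2.2.2) else 0

/-- `(Δ̂ ⊗ id)` in coordinates. -/
def coprodHatLeft (y : (G × G × G) × (G × G × G) → ℂ) :
    (G × G × G) × (G × G × G) × (G × G × G) → ℂ := fun t =>
  if t.1.1 = t.2.1.1 ∧ t.1.2.2 = t.2.1.2.1 then
    y ((t.1.1, t.1.2.1, t.2.1.2.2), t.2.2)
  else 0

/-- `(id ⊗ Δ̂)` in coordinates. -/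
def coprodHatRight (y : (G × G × G) × (G × G × G) → ℂ) :
    (G × G × G) × (G × G × G) × (G × G × G) → ℂ := fun t =>
  if t.2.1.1 = t.2.2.1 ∧ t.2.1.2.2 = t.2.2.2.1 then
    y (t.1, (t.2.1.1, t.2.1.2.1, t.2.2.2.2))
  else 0


lemma sum_lam [Fintype G] (ω : G → G → G → ℂ) (f : G × G × G → ℂ) (j c : G × G × G) :
    (∑ i : G × G × G, f i * lam ω i j c) =
      if c.2.1 = j.2.1 ∧ c.2.2 = j.2.2 then
        f (c.1 * j.1⁻¹, j.1 * j.2.1, j.1 * j.2.2) *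
          (ω (c.1 * j.1⁻¹) (j.1 * j.2.1) (j.2.1⁻¹ * j.2.2) * ω j.1 j.2.1 (j.2.1⁻¹ * j.2.2) *
            (ω c.1 j.2.1 (j.2.1⁻¹ * j.2.2))⁻¹)
      else 0 := by
  have hiff : ∀ i : G × G × G,
      (i.2.1 = j.1 * j.2.1 ∧ i.2.2 = j.1 * j.2.2 ∧ c = (i.1 * j.1, j.2.1, j.2.2)) ↔
      ((c.2.1 = j.2.1 ∧ c.2.2 = j.2.2) ∧ i = (c.1 * j.1⁻¹, j.1 * j.2.1, j.1 * j.2.2)) := by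
    intro i
    constructor
    · rintro ⟨h1, h2, h3⟩
      obtain ⟨hc1, hc2, hc3⟩ : c.1 = i.1 * j.1 ∧ c.2.1 = j.2.1 ∧ c.2.2 = j.2.2 := by
        simp [Prod.ext_iff] at h3; exact h3
      refine ⟨⟨hc2, hc3⟩, ?_⟩
      have hi1 : i.1 = c.1 * j.1⁻¹ := by rw [hc1, mul_inv_cancel_right]
      exact Prod.ext hi1 (Prod.ext h1 h2)
    · rintro ⟨⟨hc2, hc3⟩, hi⟩
      subst hi
      refine ⟨rfl, rfl, ?_⟩
      simp [Prod.ext_iff, hc2, hc3, inv_mul_cancel_right]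
  unfold lam
  simp only [mul_ite, mul_zero]
  rw [Finset.sum_congr rfl (fun i _ => by rw [if_congr (hiff i) rfl rfl])]
  by_cases hP : c.2.1 = j.2.1 ∧ c.2.2 = j.2.2
  · simp only [hP, true_and, Finset.sum_ite_eq' Finset.univ, Finset.mem_univ, if_true]
    simp [inv_mul_cancel_right]
  · simp [hP]

lemma mulA_eval [Fintype G] (ω : G → G → G → ℂ) (x y : G × G × G → ℂ) (c : G × G × G) :
    mulA ω x y c = ∑ g' : G,
      x (c.1 * g'⁻¹, g' * c.2.1, g' * c.2.2) * y (g', c.2.1, c.2.2) *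
        (ω (c.1 * g'⁻¹) (g' * c.2.1) (c.2.1⁻¹ * c.2.2) * ω g' c.2.1 (c.2.1⁻¹ * c.2.2) *
          (ω c.1 c.2.1 (c.2.1⁻¹ * c.2.2))⁻¹) := by
  rw [mulA, Finset.sum_comm]
  rw [Finset.sum_congr rfl (fun j _ => sum_lam ω (fun i => x i * y j) j c)]
  rw [Fintype.sum_prod_type]
  apply Finset.sum_congr rfl
  intro g' _
  rw [Fintype.sum_prod_type]
  simp [ite_and, Finset.sum_ite_eq]

lemma key' (ω : G → G → G → ℂ) (hnz : ∀ a b c, ω a b c ≠ 0)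
    (hcoc : ∀ a b c d, ω b c d * ω a (b * c) d * ω a b c = ω (a * b) c d * ω a b (c * d))
    (g g' k m n : G) :
    (ω g (g' * k) m * ω g' k m * (ω (g * g') k m)⁻¹) *
      (ω g (g' * (k * m)) n * ω g' (k * m) n * (ω (g * g') (k * m) n)⁻¹) =
    ω g (g' * k) (m * n) * ω g' k (m * n) * (ω (g * g') k (m * n))⁻¹ := by
  have A := hcoc g' k m n
  have B := hcoc (g * g') k m n
  have C := hcoc g (g' * k) m n
  simp only [mul_assoc] at A B C ⊢
  have hG : ω g (g' * k) m * ω g' k m * (ω g (g' * (k * m)) n * ω g' (k * m) n) *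
      ω (g * g') k (m * n) =
      ω g (g' * k) (m * n) * ω g' k (m * n) * (ω (g * g') k m * ω (g * g') (k * m) n) := by
    have hX : ω k m n * ω (g' * k) m n * ω (g * (g' * k)) m n ≠ 0 := by
      simp [hnz]
    apply mul_left_cancel₀ hX
    simp only [mul_assoc] at A B C ⊢
    linear_combination
      (ω (g' * k) m n * ω g (g' * (k * m)) n * ω g (g' * k) m *
        (ω (g * g') k (m * n) * ω (g * (g' * k)) m n)) * A +
      (ω (g' * k) m n * ω g' k (m * n) *
        (ω (g * g') k (m * n) * ω (g * (g' * k)) m n)) * C -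
      (ω g (g' * k) (m * n) * ω g' k (m * n) * ω (g' * k) m n * ω (g * (g' * k)) m n) * B
  have h1 : ω (g * g') k m ≠ 0 := hnz _ _ _
  have h2 : ω (g * g') (k * m) n ≠ 0 := hnz _ _ _
  have h3 : ω (g * g') k (m * n) ≠ 0 := hnz _ _ _
  field_simp
  linear_combination hG

-- the multiplicativity, as a standalone lemma
lemma coprod_mul [Fintype G] (ω : G → G → G → ℂ) (hnz : ∀ a b c, ω a b c ≠ 0)
    (hcoc : ∀ a b c d, ω b c d * ω a (b * c) d * ω a b c = ω (a * b) c d * ω a b (c * d))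
    (x y : G × G × G → ℂ) :
    coprodHat (mulA ω x y) = mulAA ω (coprodHat x) (coprodHat y) := by
  funext p
  obtain ⟨⟨c1, k1, h1⟩, ⟨c2, k2, h2⟩⟩ := p
  have inner : ∀ j₁ j₂ : G × G × G,
      (∑ i₁ : G × G × G, ∑ i₂ : G × G × G,
        coprodHat x (i₁, i₂) * coprodHat y (j₁, j₂) * lam ω i₁ j₁ (c1, k1, h1) *
          lam ω i₂ j₂ (c2, k2, h2)) =
      if (k2 = j₂.2.1 ∧ h2 = j₂.2.2) ∧ (k1 = j₁.2.1 ∧ h1 = j₁.2.2) then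
        coprodHat x ((c1 * j₁.1⁻¹, j₁.1 * j₁.2.1, j₁.1 * j₁.2.2),
            (c2 * j₂.1⁻¹, j₂.1 * j₂.2.1, j₂.1 * j₂.2.2)) *
          (coprodHat y (j₁, j₂) *
            (ω (c2 * j₂.1⁻¹) (j₂.1 * j₂.2.1) (j₂.2.1⁻¹ * j₂.2.2) *
              ω j₂.1 j₂.2.1 (j₂.2.1⁻¹ * j₂.2.2) * (ω c2 j₂.2.1 (j₂.2.1⁻¹ * j₂.2.2))⁻¹)) *
          (ω (c1 * j₁.1⁻¹) (j₁.1 * j₁.2.1) (j₁.2.1⁻¹ * j₁.2.2) *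
            ω j₁.1 j₁.2.1 (j₁.2.1⁻¹ * j₁.2.2) * (ω c1 j₁.2.1 (j₁.2.1⁻¹ * j₁.2.2))⁻¹)
      else 0 := by
    intro j₁ j₂
    rw [Finset.sum_congr rfl (fun i₁ _ =>
      sum_lam ω (fun i₂ => coprodHat x (i₁, i₂) * coprodHat y (j₁, j₂) *
        lam ω i₁ j₁ (c1, k1, h1)) j₂ (c2, k2, h2))]
    by_cases h2c : k2 = j₂.2.1 ∧ h2 = j₂.2.2
    · simp only [h2c, true_and, if_true, and_true]
      have hre : ∀ i₁ : G × G × G,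
          coprodHat x (i₁, c2 * j₂.1⁻¹, j₂.1 * j₂.2.1, j₂.1 * j₂.2.2) * coprodHat y (j₁, j₂) *
              lam ω i₁ j₁ (c1, k1, h1) *
            (ω (c2 * j₂.1⁻¹) (j₂.1 * j₂.2.1) (j₂.2.1⁻¹ * j₂.2.2) *
              ω j₂.1 j₂.2.1 (j₂.2.1⁻¹ * j₂.2.2) * (ω c2 j₂.2.1 (j₂.2.1⁻¹ * j₂.2.2))⁻¹) =
          (coprodHat x (i₁, c2 * j₂.1⁻¹, j₂.1 * j₂.2.1, j₂.1 * j₂.2.2) *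
            (coprodHat y (j₁, j₂) *
              (ω (c2 * j₂.1⁻¹) (j₂.1 * j₂.2.1) (j₂.2.1⁻¹ * j₂.2.2) *
                ω j₂.1 j₂.2.1 (j₂.2.1⁻¹ * j₂.2.2) * (ω c2 j₂.2.1 (j₂.2.1⁻¹ * j₂.2.2))⁻¹))) *
            lam ω i₁ j₁ (c1, k1, h1) := fun _ => by ring
      rw [Finset.sum_congr rfl fun i₁ _ => hre i₁,
        sum_lam ω (fun i₁ => coprodHat x (i₁, c2 * j₂.1⁻¹, j₂.1 * j₂.2.1, j₂.1 * j₂.2.2) *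
          (coprodHat y (j₁, j₂) *
            (ω (c2 * j₂.1⁻¹) (j₂.1 * j₂.2.1) (j₂.2.1⁻¹ * j₂.2.2) *
              ω j₂.1 j₂.2.1 (j₂.2.1⁻¹ * j₂.2.2) * (ω c2 j₂.2.1 (j₂.2.1⁻¹ * j₂.2.2))⁻¹))) j₁
          (c1, k1, h1)]
    · simp [h2c]
  have reorder : mulAA ω (coprodHat x) (coprodHat y) ((c1, k1, h1), (c2, k2, h2)) =
      ∑ j₁ : G × G × G, ∑ j₂ : G × G × G, ∑ i₁ : G × G × G, ∑ i₂ : G × G × G,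
        coprodHat x (i₁, i₂) * coprodHat y (j₁, j₂) * lam ω i₁ j₁ (c1, k1, h1) *
          lam ω i₂ j₂ (c2, k2, h2) := by
    rw [mulAA, Finset.sum_comm]
    exact Finset.sum_congr rfl fun j₁ _ => by
      rw [Finset.sum_congr rfl fun i₁ (_ : i₁ ∈ univ) => Finset.sum_comm]
      exact Finset.sum_comm
  rw [reorder,
    Finset.sum_congr rfl fun j₁ (_ : j₁ ∈ univ) =>
      Finset.sum_congr rfl fun j₂ (_ : j₂ ∈ univ) => inner j₁ j₂]
  simp only [coprodHat, Fintype.sum_prod_type, ite_and, mul_ite, ite_mul, zero_mul, mul_zero,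
    Finset.sum_ite_eq, Finset.sum_ite_eq', Finset.mem_univ, if_true, mul_left_inj, mul_right_inj,
    Finset.sum_ite_irrel, Finset.sum_const_zero]
  split_ifs with h h' <;> try rfl
  subst h
  subst h'
  rw [mulA_eval]
  apply Finset.sum_congr rfl
  intro g _
  have hkey := key' ω hnz hcoc (c1 * g⁻¹) g k1 (k1⁻¹ * h1) (h1⁻¹ * h2)
  simp only [mul_assoc, inv_mul_cancel, mul_one, one_mul, mul_inv_cancel_left,
    inv_mul_cancel_left, mul_inv_cancel] at hkey ⊢
  linear_combination -(x (c1 * g⁻¹, g * k1, g * h2) * y (g, k1, h2)) * hkey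

/-- For a finite group `G` and a normalized `U(1)`-valued 3-cocycle `ω`, the coproduct
`Δ̂(b_g^{k,h}) = ∑_l b_g^{k,l} ⊗ b_g^{l,h}` on `𝒜` is coassociative, multiplicative
(`Δ̂(xy) = Δ̂(x)Δ̂(y)`), and admits the counit `ε(b_g^{k,h}) = δ_{k,h}`, i.e.
`(ε ⊗ id) ∘ Δ̂ = (id ⊗ ε) ∘ Δ̂ = id`. -/
theorem coprodHat_weak_hopf
    {G : Type*} [Group G] [Fintype G] [DecidableEq G]
    (ω : G → G → G → ℂ)
    (hnorm : ∀ g k h, ‖ω g k h‖ = 1)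
    (hone : ∀ k l, ω 1 k l = 1 ∧ ω k 1 l = 1 ∧ ω k l 1 = 1)
    (hcoc : ∀ a b c d, ω b c d * ω a (b * c) d * ω a b c = ω (a * b) c d * ω a b (c * d)) :
    (∀ x : G × G × G → ℂ, coprodHatLeft (coprodHat x) = coprodHatRight (coprodHat x)) ∧
    (∀ x y : G × G × G → ℂ,
      coprodHat (mulA ω x y) = mulAA ω (coprodHat x) (coprodHat y)) ∧
    (∀ (x : G × G × G → ℂ) (c : G × G × G),
      (∑ g : G, ∑ k : G, coprodHat x ((g, k, k), c)) = x c ∧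
      (∑ g : G, ∑ k : G, coprodHat x (c, (g, k, k))) = x c) := by
  have hnz : ∀ a b c : G, ω a b c ≠ 0 := by
    intro a b c h
    have := hnorm a b c
    rw [h] at this
    simp at this
  refine ⟨?_, fun x y => coprod_mul ω hnz hcoc x y, ?_⟩
  · intro x
    funext t
    obtain ⟨⟨a1, a2, a3⟩, ⟨b1, b2, b3⟩, ⟨d1, d2, d3⟩⟩ := t
    simp only [coprodHatLeft, coprodHatRight, coprodHat]
    split_ifs <;> simp_all
  · intro x c
    constructor <;>
      simp [coprodHat, ite_and, Finset.sum_ite_eq, Finset.sum_ite_eq']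
end
end
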